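/- The map h is not topologically transitive on [−1/2, 1]: there exist nonempty open sets U, V ⊆ [−1/2, 1] such that hⁿ(U) ∩ V = ∅ for every positive integer n. -/
import Mathlib


open Filter

/-- The map `h : [-1/2,1] → [-1/2,1]` given by `h(x) = -x` on `[-1/2,0]` and
`h(x) = T(x) = 1 - |2x - 1|` on `[0,1]`. -/
noncomputable def hMap (x : ℝ) : ℝ :=
  if x ≤ 0 then -x else 1 - |2 * x - 1|

lemma hMap_mem_Icc {x : ℝ} (hx : x ∈ Set.Icc (0:ℝ) 1) : hMap x ∈ Set.Icc (0:ℝ) 1 := by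
  obtain ⟨h0, h1⟩ := hx
  unfold hMap
  split_ifs with h
  · have : x = 0 := le_antisymm h h0
    simp [this]
  · constructor
    · have : |2 * x - 1| ≤ 1 := by
        rw [abs_le]; constructor <;> linarith
      linarith
    · have : 0 ≤ |2 * x - 1| := abs_nonneg _
      linarith

lemma hMap_iter_mem_Icc {x : ℝ} (hx : x ∈ Set.Icc (0:ℝ) 1) (n : ℕ) :
    hMap^[n] x ∈ Set.Icc (0:ℝ) 1 := by
  induction n with
  | zero => simpa using hx
  | succ n ih => rw [Function.iterate_succ_apply']; exact hMap_mem_Icc ih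

/-- `h` is not topologically transitive on `[-1/2,1]`: there are nonempty
(relatively) open subsets `U, V` of `[-1/2,1]` such that `hⁿ(U) ∩ V = ∅` for
every positive integer `n`. -/
theorem hMap_not_topologically_transitive :
    ∃ U V : Set ℝ, U ⊆ Set.Icc (-(1 / 2) : ℝ) 1 ∧ V ⊆ Set.Icc (-(1 / 2) : ℝ) 1 ∧
      (∃ U' : Set ℝ, IsOpen U' ∧ U = Set.Icc (-(1 / 2) : ℝ) 1 ∩ U') ∧
      (∃ V' : Set ℝ, IsOpen V' ∧ V = Set.Icc (-(1 / 2) : ℝ) 1 ∩ V') ∧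
      U.Nonempty ∧ V.Nonempty ∧
      ∀ n : ℕ, 0 < n → (hMap^[n] '' U) ∩ V = ∅ := by
  refine ⟨Set.Icc (-(1/2) : ℝ) 1 ∩ Set.Ioo 0 1, Set.Icc (-(1/2) : ℝ) 1 ∩ Set.Iio 0,
    Set.inter_subset_left, Set.inter_subset_left,
    ⟨Set.Ioo 0 1, isOpen_Ioo, rfl⟩, ⟨Set.Iio 0, isOpen_Iio, rfl⟩,
    ⟨1/2, by norm_num⟩, ⟨-(1/4), by norm_num⟩, ?_⟩
  intro n _
  ext y
  simp only [Set.mem_inter_iff, Set.mem_image, Set.mem_Iio, Set.mem_empty_iff_false,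
    iff_false, not_and]
  rintro ⟨x, ⟨_, hx⟩, rfl⟩ ⟨_, hy⟩
  have := hMap_iter_mem_Icc ⟨le_of_lt hx.1, le_of_lt hx.2⟩ n
  linarith [this.1]
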